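/- arXiv:2312.09752 — 6 statements merged into one kernel-verified Lean document; each statement's English description precedes it below -/
import Mathlib

section
/- There exists a Friedrichs constant C_fr > 0 such that |v|_M ≤ C_fr |v|_L for all v ∈ V. -/
/-!
Both `|v|_M²` and `|v|_L²` are continuous and 2-homogeneous in `v`, and `|v|_L²` is positive on
`V ∖ {0}`: a function with zero energy is constant along edges, hence constant on the connected
graph, hence zero since it vanishes on `Γ`. On the compact unit sphere of the finite-dimensional
space `V` the ratio `|v|_M² / |v|_L²` is therefore bounded, and homogeneity extends the bound to
all of `V`.
-/

open Finset

variable {n : ℕ} {N : Type*}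

/-- The (edge-weighted) mass bilinear form `(M_S u, v)`. -/
noncomputable def Mform [Fintype N] (G : SimpleGraph N) [DecidableRel G.Adj]
    (pos : N → EuclideanSpace ℝ (Fin n)) (α : ℝ) (S : Finset N) (u v : N → ℝ) : ℝ :=
  ∑ x ∈ S, (1 / 2 : ℝ) * ∑ y ∈ G.neighborFinset x,
    dist (pos x) (pos y) ^ ((2 : ℝ) - α) * (u x * v x)

/-- The (edge-weighted) stiffness bilinear form `(L_S u, v)`. -/
noncomputable def Lform [Fintype N] (G : SimpleGraph N) [DecidableRel G.Adj]
    (pos : N → EuclideanSpace ℝ (Fin n)) (α : ℝ) (S : Finset N) (u v : N → ℝ) : ℝ :=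
  ∑ x ∈ S, (1 / 2 : ℝ) * ∑ y ∈ G.neighborFinset x,
    ((u x - u y) * (v x - v y)) / dist (pos x) (pos y) ^ α

/-- `|v|_{M,S}`. -/
noncomputable def Mnorm [Fintype N] (G : SimpleGraph N) [DecidableRel G.Adj]
    (pos : N → EuclideanSpace ℝ (Fin n)) (α : ℝ) (S : Finset N) (v : N → ℝ) : ℝ :=
  Real.sqrt (Mform G pos α S v v)

/-- `|v|_{L,S}`. -/
noncomputable def Lnorm [Fintype N] (G : SimpleGraph N) [DecidableRel G.Adj]
    (pos : N → EuclideanSpace ℝ (Fin n)) (α : ℝ) (S : Finset N) (v : N → ℝ) : ℝ :=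
  Real.sqrt (Lform G pos α S v v)

/-- The element average `q_T(v) = (M_T v, 1) / |1|_{M,T}^2`. -/
noncomputable def avg [Fintype N] (G : SimpleGraph N) [DecidableRel G.Adj]
    (pos : N → EuclideanSpace ℝ (Fin n)) (α : ℝ) (T : Finset N) (v : N → ℝ) : ℝ :=
  Mform G pos α T v (fun _ => 1) / Mform G pos α T (fun _ => 1) (fun _ => 1)

/-- Euclidean inner product of functions on the node set. -/
noncomputable def ip [Fintype N] (u v : N → ℝ) : ℝ := ∑ x, u x * v x

/-- Length of a walk: the sum of Euclidean edge lengths. -/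
noncomputable def wlen (G : SimpleGraph N) (pos : N → EuclideanSpace ℝ (Fin n))
    {x y : N} (w : G.Walk x y) : ℝ :=
  (w.darts.map (fun d => dist (pos d.toProd.1) (pos d.toProd.2))).sum

/-- Graph distance from `x` to the boundary set `bnd`, along paths inside `T`. -/
noncomputable def distT (G : SimpleGraph N) (pos : N → EuclideanSpace ℝ (Fin n))
    (T bnd : Finset N) (x : N) : ℝ :=
  sInf {ℓ : ℝ | ∃ y ∈ bnd, ∃ w : G.Walk x y, (∀ z ∈ w.support, z ∈ T) ∧ ℓ = wlen G pos w}

/-- The non-normalized bubble function `b̃_T`. -/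
noncomputable def btilde [DecidableEq N] (G : SimpleGraph N) (pos : N → EuclideanSpace ℝ (Fin n))
    (T bnd : Finset N) : N → ℝ :=
  fun x => if x ∈ T then distT G pos T bnd x else 0

theorem exists_le_mul_of_pos_on_submodule {E : Type*} [NormedAddCommGroup E] [NormedSpace ℝ E]
    [FiniteDimensional ℝ E] (S : Submodule ℝ E) {f g : E → ℝ} (hf : Continuous f)
    (hg : Continuous g) (hf_smul : ∀ (c : ℝ) v, f (c • v) = c ^ 2 * f v)
    (hg_smul : ∀ (c : ℝ) v, g (c • v) = c ^ 2 * g v) (hg_pos : ∀ v ∈ S, v ≠ 0 → 0 < g v) :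
    ∃ C : ℝ, 0 < C ∧ ∀ v ∈ S, f v ≤ C * g v := by
  set K : Set E := (S : Set E) ∩ Metric.sphere 0 1
  have hK : IsCompact K := (isCompact_sphere 0 1).inter_left S.closed_of_finiteDimensional
  have hg_pos_K : ∀ u ∈ K, 0 < g u := fun u hu =>
    hg_pos u hu.1 (ne_zero_of_mem_sphere one_ne_zero ⟨u, hu.2⟩)
  obtain ⟨C₀, hC₀⟩ := hK.bddAbove_image
    (hf.continuousOn.div hg.continuousOn fun u hu => (hg_pos_K u hu).ne')
  refine ⟨max C₀ 1, by positivity, fun v hv => ?_⟩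
  rcases eq_or_ne v 0 with rfl | hv0
  · have hf0 : f 0 = 0 := by simpa using hf_smul 0 0
    have hg0 : g 0 = 0 := by simpa using hg_smul 0 0
    simp [hf0, hg0]
  set u := ‖v‖⁻¹ • v
  have huK : u ∈ K := ⟨S.smul_mem _ hv, by simp [u, norm_smul, hv0]⟩
  have hfu : f u ≤ max C₀ 1 * g u := by
    have : f u / g u ≤ C₀ := hC₀ ⟨u, huK, rfl⟩
    rw [div_le_iff₀ (hg_pos_K u huK)] at this
    exact this.trans (mul_le_mul_of_nonneg_right (le_max_left _ _) (hg_pos_K u huK).le)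
  have hvu : v = ‖v‖ • u := by simp [u, smul_smul, hv0]
  rw [hvu, hf_smul, hg_smul]
  rw [mul_left_comm]
  exact mul_le_mul_of_nonneg_left hfu (sq_nonneg _)

theorem SimpleGraph.Reachable.apply_eq_of_forall_adj {V β : Type*} {G : SimpleGraph V}
    {f : V → β} (hf : ∀ a b, G.Adj a b → f a = f b) {x y : V} (hxy : G.Reachable x y) :
    f x = f y := by
  obtain ⟨w⟩ := hxy
  induction w with
  | nil => rfl
  | cons hab _ ih => exact (hf _ _ hab).trans ih

section Forms

variable [Fintype N] (G : SimpleGraph N) [DecidableRel G.Adj]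
  (pos : N → EuclideanSpace ℝ (Fin n)) (α : ℝ)

theorem Mform_smul_smul (S : Finset N) (c : ℝ) (v : N → ℝ) :
    Mform G pos α S (c • v) (c • v) = c ^ 2 * Mform G pos α S v v := by
  simp only [Mform, Pi.smul_apply, smul_eq_mul, mul_sum]
  exact sum_congr rfl fun _ _ => sum_congr rfl fun _ _ => by ring

theorem Lform_smul_smul (S : Finset N) (c : ℝ) (v : N → ℝ) :
    Lform G pos α S (c • v) (c • v) = c ^ 2 * Lform G pos α S v v := by
  simp only [Lform, Pi.smul_apply, smul_eq_mul, mul_sum]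
  exact sum_congr rfl fun _ _ => sum_congr rfl fun _ _ => by ring

theorem continuous_Mform_self (S : Finset N) : Continuous fun v => Mform G pos α S v v := by
  unfold Mform
  fun_prop

theorem continuous_Lform_self (S : Finset N) : Continuous fun v => Lform G pos α S v v := by
  unfold Lform
  fun_prop

theorem Lform_self_nonneg (S : Finset N) (v : N → ℝ) : 0 ≤ Lform G pos α S v v :=
  sum_nonneg fun _ _ => mul_nonneg one_half_pos.le <| sum_nonneg fun _ _ =>
    div_nonneg (mul_self_nonneg _) (Real.rpow_nonneg dist_nonneg _)

theorem eq_of_Lform_self_eq_zero {S : Finset N} {v : N → ℝ} (h : Lform G pos α S v v = 0)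
    {x y : N} (hx : x ∈ S) (hxy : G.Adj x y) (hd : 0 < dist (pos x) (pos y)) : v x = v y := by
  have hterm : ∀ a b, 0 ≤ (v a - v b) * (v a - v b) / dist (pos a) (pos b) ^ α :=
    fun _ _ => div_nonneg (mul_self_nonneg _) (Real.rpow_nonneg dist_nonneg _)
  rw [Lform, sum_eq_zero_iff_of_nonneg fun a _ =>
    mul_nonneg one_half_pos.le (sum_nonneg fun b _ => hterm a b)] at h
  have hx0 := (sum_eq_zero_iff_of_nonneg fun b _ => hterm x b).1
    ((mul_eq_zero.1 (h x hx)).resolve_left one_half_pos.ne') y ((G.mem_neighborFinset x y).2 hxy)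
  rw [div_eq_zero_iff, or_iff_left (Real.rpow_pos_of_pos hd α).ne', mul_self_eq_zero] at hx0
  exact sub_eq_zero.1 hx0

theorem Lform_self_pos (hdist : ∀ x y : N, G.Adj x y → 0 < dist (pos x) (pos y))
    (hconn : G.Connected) {v : N → ℝ} (hv : v ≠ 0) {γ : N} (hγ : v γ = 0) :
    0 < Lform G pos α univ v v := by
  refine (Lform_self_nonneg G pos α univ v).lt_of_ne' fun h => hv (funext fun x => ?_)
  rw [Pi.zero_apply, ← hγ]
  exact (hconn x γ).apply_eq_of_forall_adj fun a b hab =>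
    eq_of_Lform_self_eq_zero G pos α h (mem_univ a) hab (hdist a b hab)

end Forms

theorem stmt1_general [Fintype N] (G : SimpleGraph N) [DecidableRel G.Adj]
    (pos : N → EuclideanSpace ℝ (Fin n)) (α : ℝ)
    (hdist : ∀ x y : N, G.Adj x y → 0 < dist (pos x) (pos y))
    (hconn : G.Connected)
    (Γ : Set N) (hΓ : Γ.Nonempty) :
    ∃ Cfr : ℝ, 0 < Cfr ∧ ∀ v : N → ℝ, (∀ x ∈ Γ, v x = 0) →
      Mnorm G pos α Finset.univ v ≤ Cfr * Lnorm G pos α Finset.univ v := by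
  obtain ⟨γ, hγ⟩ := hΓ
  obtain ⟨C, hC, hle⟩ := exists_le_mul_of_pos_on_submodule (Submodule.pi Γ fun _ => ⊥)
    (continuous_Mform_self G pos α univ) (continuous_Lform_self G pos α univ)
    (Mform_smul_smul G pos α univ) (Lform_smul_smul G pos α univ)
    fun v hv hv0 => Lform_self_pos G pos α hdist hconn hv0 ((Submodule.mem_bot ℝ).1 (hv γ hγ))
  refine ⟨√C, Real.sqrt_pos.2 hC, fun v hv => ?_⟩
  rw [Mnorm, Lnorm, ← Real.sqrt_mul hC.le]
  exact Real.sqrt_le_sqrt (hle v fun x hx => (Submodule.mem_bot ℝ).2 (hv x hx))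

theorem stmt1 [Fintype N] [DecidableEq N] (G : SimpleGraph N) [DecidableRel G.Adj]
    (pos : N → EuclideanSpace ℝ (Fin n)) (α : ℝ)
    (hα : 0 ≤ α ∧ α ≤ 2) (hpos : Function.Injective pos)
    (hdist : ∀ x y : N, G.Adj x y → 0 < dist (pos x) (pos y))
    (hcard : 1 < Fintype.card N) (hconn : G.Connected)
    (Γ : Set N) (hΓ : Γ.Nonempty) :
    ∃ Cfr : ℝ, 0 < Cfr ∧ ∀ v : N → ℝ, (∀ x ∈ Γ, v x = 0) →
      Mnorm G pos α Finset.univ v ≤ Cfr * Lnorm G pos α Finset.univ v :=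
  stmt1_general G pos α hdist hconn Γ hΓ
end

section
/- Element-wise Poincaré inequality: let T ⊆ 𝒩 be a nonempty subset whose induced subgraph is connected. Then there exists a constant C_po > 0 such that |v − q_T(v)·1|_{M,T} ≤ C_po |v|_{L,T} for all v : 𝒩 → ℝ, where q_T(v) = (M_T v, 1)/|1|_{M,T}² is the element average of v over T. -/
/-!
The centred function `w = v - q_T(v)` (extended by `0` off `T`) lies in the finite-dimensional
space of functions supported on `T` with vanishing `M_T`-mean. On that space the energy of the
edges inside `T` is positive definite: if it vanishes, `w` is constant along every edge of the
connected induced subgraph, hence constant on `T`, and the mean condition forces `w = 0`.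
Compactness of the unit sphere turns this into `m ‖w‖² ≤ energy`, while `|w|²_{M,T} ≤ |1|²_{M,T} ‖w‖²`
for the sup norm. (When `|1|_{M,T} = 0` the left-hand side vanishes identically.)
-/

open Finset

variable {n : ℕ} {N : Type*}

theorem exists_pos_mul_norm_sq_le_of_pos {E : Type*} [NormedAddCommGroup E] [NormedSpace ℝ E]
    [FiniteDimensional ℝ E] (S : Submodule ℝ E) {f : E → ℝ} (hf : Continuous f)
    (hf_smul : ∀ (c : ℝ) (x : E), f (c • x) = c ^ 2 * f x)
    (hf_pos : ∀ x ∈ S, x ≠ 0 → 0 < f x) :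
    ∃ m > 0, ∀ x ∈ S, m * ‖x‖ ^ 2 ≤ f x := by
  have hK : IsCompact ((S : Set E) ∩ Metric.sphere 0 1) :=
    (isCompact_sphere 0 1).inter_left S.closed_of_finiteDimensional
  obtain ⟨m, hm, hmK⟩ := hK.exists_forall_le' hf.continuousOn (a := 0) fun x hx =>
    hf_pos x hx.1 (Metric.ne_of_mem_sphere hx.2 one_ne_zero)
  refine ⟨m, hm, fun x hx => ?_⟩
  rcases eq_or_ne x 0 with rfl | hx0
  · have hf0 : f 0 = 0 := by simpa using hf_smul 0 0
    simp [hf0]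
  · have hnorm : 0 < ‖x‖ := norm_pos_iff.mpr hx0
    have hy : ‖x‖⁻¹ • x ∈ (S : Set E) ∩ Metric.sphere 0 1 :=
      ⟨S.smul_mem _ hx, by simp [norm_smul, hnorm.ne']⟩
    calc m * ‖x‖ ^ 2 ≤ f (‖x‖⁻¹ • x) * ‖x‖ ^ 2 := by gcongr; exact hmK _ hy
      _ = f x := by rw [hf_smul]; field_simp

theorem SimpleGraph.Reachable.eq_of_forall_adj {V β : Type*} {G : SimpleGraph V} {f : V → β}
    (hf : ∀ a b, G.Adj a b → f a = f b) {u v : V} (h : G.Reachable u v) : f u = f v := by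
  obtain ⟨p⟩ := h
  induction p with
  | nil => rfl
  | cons hadj _ ih => exact (hf _ _ hadj).trans ih

section Mass

variable [Fintype N] (G : SimpleGraph N) [DecidableRel G.Adj]
  (pos : N → EuclideanSpace ℝ (Fin n)) (α : ℝ)

noncomputable def massWeight (x : N) : ℝ :=
  (1 / 2 : ℝ) * ∑ y ∈ G.neighborFinset x, dist (pos x) (pos y) ^ ((2 : ℝ) - α)

lemma massWeight_nonneg (x : N) : 0 ≤ massWeight G pos α x := by
  unfold massWeight
  positivity

lemma Mform_eq_sum_massWeight (S : Finset N) (u v : N → ℝ) :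
    Mform G pos α S u v = ∑ x ∈ S, massWeight G pos α x * (u x * v x) := by
  unfold Mform massWeight
  refine sum_congr rfl fun x _ => ?_
  rw [← sum_mul, ← mul_assoc]

lemma Mform_self_congr {S : Finset N} {u v : N → ℝ} (h : ∀ x ∈ S, u x = v x) :
    Mform G pos α S u u = Mform G pos α S v v := by
  simp only [Mform_eq_sum_massWeight]
  exact sum_congr rfl fun x hx => by rw [h x hx]

lemma Mform_self_nonneg (S : Finset N) (u : N → ℝ) : 0 ≤ Mform G pos α S u u := by
  rw [Mform_eq_sum_massWeight]
  exact sum_nonneg fun x _ => mul_nonneg (massWeight_nonneg G pos α x) (mul_self_nonneg _)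

lemma Mform_self_le_mul_norm_sq (S : Finset N) (u : N → ℝ) :
    Mform G pos α S u u ≤ Mform G pos α S (fun _ => 1) (fun _ => 1) * ‖u‖ ^ 2 := by
  simp only [Mform_eq_sum_massWeight, sum_mul]
  refine sum_le_sum fun x _ => ?_
  have hux : u x * u x ≤ ‖u‖ ^ 2 := by
    rw [← sq, ← sq_abs, ← Real.norm_eq_abs]
    exact pow_le_pow_left₀ (norm_nonneg _) (norm_le_pi_norm u x) 2
  nlinarith [massWeight_nonneg G pos α x]

lemma Mform_one_of_forall_eq (S : Finset N) (w : N → ℝ) (c : ℝ) (h : ∀ x ∈ S, w x = c) :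
    Mform G pos α S w (fun _ => 1) = c * Mform G pos α S (fun _ => 1) (fun _ => 1) := by
  simp only [Mform_eq_sum_massWeight, mul_sum]
  exact sum_congr rfl fun x hx => by rw [h x hx]; ring

end Mass

section InducedEnergy

variable (G : SimpleGraph N) [DecidableRel G.Adj] (pos : N → EuclideanSpace ℝ (Fin n)) (α : ℝ)

noncomputable def inducedEnergy (T : Finset N) (v : N → ℝ) : ℝ :=
  ∑ x ∈ T, (1 / 2 : ℝ) * ∑ y ∈ T with G.Adj x y,
    ((v x - v y) * (v x - v y)) / dist (pos x) (pos y) ^ α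

variable {G pos α}

lemma inducedEnergy_nonneg (T : Finset N) (v : N → ℝ) : 0 ≤ inducedEnergy G pos α T v :=
  sum_nonneg fun _ _ => mul_nonneg (by norm_num) <| sum_nonneg fun _ _ =>
    div_nonneg (mul_self_nonneg _) (Real.rpow_nonneg dist_nonneg _)

lemma inducedEnergy_le_Lform [Fintype N] (T : Finset N) (v : N → ℝ) :
    inducedEnergy G pos α T v ≤ Lform G pos α T v v := by
  refine sum_le_sum fun x _ => mul_le_mul_of_nonneg_left ?_ (by norm_num)
  refine sum_le_sum_of_subset_of_nonneg (fun y hy => ?_) fun y _ _ =>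
    div_nonneg (mul_self_nonneg _) (Real.rpow_nonneg dist_nonneg _)
  exact (G.mem_neighborFinset x y).mpr (mem_filter.mp hy).2

lemma inducedEnergy_smul (T : Finset N) (c : ℝ) (v : N → ℝ) :
    inducedEnergy G pos α T (c • v) = c ^ 2 * inducedEnergy G pos α T v := by
  simp only [inducedEnergy, mul_sum, Pi.smul_apply, smul_eq_mul]
  exact sum_congr rfl fun x _ => sum_congr rfl fun y _ => by ring

lemma inducedEnergy_congr_sub_const {T : Finset N} {u v : N → ℝ} (c : ℝ)
    (h : ∀ x ∈ T, u x = v x - c) : inducedEnergy G pos α T u = inducedEnergy G pos α T v := by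
  refine sum_congr rfl fun x hx => congrArg _ <| sum_congr rfl fun y hy => ?_
  rw [h x hx, h y (mem_filter.mp hy).1, sub_sub_sub_cancel_right]

lemma continuous_inducedEnergy (T : Finset N) : Continuous (inducedEnergy G pos α T) := by
  unfold inducedEnergy
  fun_prop

lemma eq_of_inducedEnergy_eq_zero (hdist : ∀ x y : N, G.Adj x y → 0 < dist (pos x) (pos y))
    {T : Finset N} {v : N → ℝ} (hv : inducedEnergy G pos α T v = 0) {x y : N} (hx : x ∈ T)
    (hy : y ∈ T) (hxy : G.Adj x y) : v x = v y := by
  have hrow := (sum_eq_zero_iff_of_nonneg fun x _ => mul_nonneg (by norm_num) <|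
    sum_nonneg fun y _ => div_nonneg (mul_self_nonneg _) (Real.rpow_nonneg dist_nonneg _)).mp
    hv x hx
  have hterm := (sum_eq_zero_iff_of_nonneg fun y _ =>
    div_nonneg (mul_self_nonneg _) (Real.rpow_nonneg dist_nonneg _)).mp
    ((mul_eq_zero.mp hrow).resolve_left (by norm_num)) y (mem_filter.mpr ⟨hy, hxy⟩)
  have hd : dist (pos x) (pos y) ^ α ≠ 0 := (Real.rpow_pos_of_pos (hdist x y hxy) α).ne'
  exact sub_eq_zero.mp (mul_self_eq_zero.mp ((div_eq_zero_iff.mp hterm).resolve_right hd))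

lemma eqOn_of_inducedEnergy_eq_zero (hdist : ∀ x y : N, G.Adj x y → 0 < dist (pos x) (pos y))
    {T : Finset N} (hTconn : (G.induce (T : Set N)).Connected) {v : N → ℝ}
    (hv : inducedEnergy G pos α T v = 0) {x y : N} (hx : x ∈ T) (hy : y ∈ T) : v x = v y :=
  (hTconn.preconnected ⟨x, hx⟩ ⟨y, hy⟩).eq_of_forall_adj (f := fun z : (T : Set N) => v z)
    fun a b hab => eq_of_inducedEnergy_eq_zero hdist hv a.2 b.2 hab

end InducedEnergy

section Poincare

variable [Fintype N] (G : SimpleGraph N) [DecidableRel G.Adj]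
  (pos : N → EuclideanSpace ℝ (Fin n)) (α : ℝ)

noncomputable def zeroMeanOn (T : Finset N) : Submodule ℝ (N → ℝ) where
  carrier := {w | (∀ x ∉ T, w x = 0) ∧ Mform G pos α T w (fun _ => 1) = 0}
  zero_mem' := ⟨fun _ _ => rfl, by simp [Mform_eq_sum_massWeight]⟩
  add_mem' := fun {u v} hu hv => ⟨fun x hx => by simp [hu.1 x hx, hv.1 x hx], by
    simp only [Mform_eq_sum_massWeight] at hu hv ⊢
    simp only [Pi.add_apply, add_mul, mul_add, sum_add_distrib, hu.2, hv.2, add_zero]⟩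
  smul_mem' := fun c {u} hu => ⟨fun x hx => by simp [hu.1 x hx], by
    simp only [Mform_eq_sum_massWeight] at hu ⊢
    simp only [Pi.smul_apply, smul_eq_mul, mul_assoc, mul_left_comm _ c, ← mul_sum, hu.2,
      mul_zero]⟩

variable {G pos α}

lemma inducedEnergy_pos_of_mem_zeroMeanOn
    (hdist : ∀ x y : N, G.Adj x y → 0 < dist (pos x) (pos y)) {T : Finset N}
    (hTconn : (G.induce (T : Set N)).Connected)
    (hM : Mform G pos α T (fun _ => 1) (fun _ => 1) ≠ 0) {w : N → ℝ}
    (hw : w ∈ zeroMeanOn G pos α T) (hw0 : w ≠ 0) : 0 < inducedEnergy G pos α T w := by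
  refine (inducedEnergy_nonneg T w).lt_of_ne fun h0 => hw0 ?_
  obtain ⟨x₀, hx₀, -⟩ := exists_ne_zero_of_sum_ne_zero hM
  have hconst : ∀ x ∈ T, w x = w x₀ := fun x hx =>
    eqOn_of_inducedEnergy_eq_zero hdist hTconn h0.symm hx hx₀
  have hwx₀ : w x₀ = 0 := by
    have hmean := hw.2
    rw [Mform_one_of_forall_eq G pos α T w _ hconst] at hmean
    exact (mul_eq_zero.mp hmean).resolve_right hM
  funext x
  by_cases hx : x ∈ T
  · rw [hconst x hx, hwx₀, Pi.zero_apply]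
  · exact hw.1 x hx

lemma indicator_sub_avg_mem_zeroMeanOn {T : Finset N}
    (hM : Mform G pos α T (fun _ => 1) (fun _ => 1) ≠ 0) (v : N → ℝ) :
    (T : Set N).indicator (fun x => v x - avg G pos α T v) ∈ zeroMeanOn G pos α T := by
  refine ⟨fun x hx => Set.indicator_of_notMem (by simpa using hx) _, ?_⟩
  have hsplit : Mform G pos α T ((T : Set N).indicator fun x => v x - avg G pos α T v)
      (fun _ => 1) = Mform G pos α T v (fun _ => 1) -
        avg G pos α T v * Mform G pos α T (fun _ => 1) (fun _ => 1) := by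
    simp only [Mform_eq_sum_massWeight, mul_sum, ← sum_sub_distrib]
    exact sum_congr rfl fun x hx => by
      rw [Set.indicator_of_mem (mem_coe.mpr hx)]; ring
  rw [hsplit, avg, div_mul_cancel₀ _ hM, sub_self]

theorem exists_Mform_sub_avg_le_inducedEnergy
    (hdist : ∀ x y : N, G.Adj x y → 0 < dist (pos x) (pos y)) {T : Finset N}
    (hTconn : (G.induce (T : Set N)).Connected) :
    ∃ C > 0, ∀ v : N → ℝ, Mform G pos α T (fun x => v x - avg G pos α T v)
      (fun x => v x - avg G pos α T v) ≤ C * inducedEnergy G pos α T v := by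
  set M₁ := Mform G pos α T (fun _ => 1) (fun _ => 1)
  rcases (Mform_self_nonneg G pos α T (fun _ => 1)).eq_or_lt with hM | hM
  · refine ⟨1, one_pos, fun v => ?_⟩
    have := Mform_self_le_mul_norm_sq G pos α T (fun x => v x - avg G pos α T v)
    rw [← hM, zero_mul] at this
    exact this.trans (by simpa using inducedEnergy_nonneg T v)
  obtain ⟨m, hm, hcoer⟩ := exists_pos_mul_norm_sq_le_of_pos (zeroMeanOn G pos α T)
    (continuous_inducedEnergy T) (inducedEnergy_smul T)
    fun w hw hw0 => inducedEnergy_pos_of_mem_zeroMeanOn hdist hTconn hM.ne' hw hw0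
  refine ⟨M₁ / m, div_pos hM hm, fun v => ?_⟩
  set w := (T : Set N).indicator fun x => v x - avg G pos α T v
  have hw_eq : ∀ x ∈ T, w x = v x - avg G pos α T v := fun x hx =>
    Set.indicator_of_mem (mem_coe.mpr hx) _
  calc Mform G pos α T (fun x => v x - avg G pos α T v) (fun x => v x - avg G pos α T v)
      = Mform G pos α T w w := Mform_self_congr G pos α fun x hx => (hw_eq x hx).symm
    _ ≤ M₁ * ‖w‖ ^ 2 := Mform_self_le_mul_norm_sq G pos α T w
    _ = M₁ / m * (m * ‖w‖ ^ 2) := by field_simp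
    _ ≤ M₁ / m * inducedEnergy G pos α T w := by
        gcongr
        exact hcoer w (indicator_sub_avg_mem_zeroMeanOn hM.ne' v)
    _ = M₁ / m * inducedEnergy G pos α T v := by
        rw [inducedEnergy_congr_sub_const _ hw_eq]

end Poincare

theorem stmt3_general [Fintype N] (G : SimpleGraph N) [DecidableRel G.Adj]
    (pos : N → EuclideanSpace ℝ (Fin n)) (α : ℝ)
    (hdist : ∀ x y : N, G.Adj x y → 0 < dist (pos x) (pos y))
    (T : Finset N)
    (hTconn : (G.induce (T : Set N)).Connected) :
    ∃ Cpo : ℝ, 0 < Cpo ∧ ∀ v : N → ℝ,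
      Mnorm G pos α T (fun x => v x - avg G pos α T v) ≤ Cpo * Lnorm G pos α T v := by
  obtain ⟨C, hC, hle⟩ := exists_Mform_sub_avg_le_inducedEnergy (α := α) hdist hTconn
  refine ⟨√C, Real.sqrt_pos.mpr hC, fun v => ?_⟩
  calc Mnorm G pos α T (fun x => v x - avg G pos α T v)
      ≤ √(C * Lform G pos α T v v) :=
        Real.sqrt_le_sqrt <| (hle v).trans <| by gcongr; exact inducedEnergy_le_Lform T v
    _ = √C * Lnorm G pos α T v := Real.sqrt_mul hC.le _

theorem stmt3 [Fintype N] [DecidableEq N] (G : SimpleGraph N) [DecidableRel G.Adj]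
    (pos : N → EuclideanSpace ℝ (Fin n)) (α : ℝ)
    (hα : 0 ≤ α ∧ α ≤ 2) (hpos : Function.Injective pos)
    (hdist : ∀ x y : N, G.Adj x y → 0 < dist (pos x) (pos y))
    (hcard : 1 < Fintype.card N) (hconn : G.Connected)
    (T : Finset N) (hT : T.Nonempty)
    (hTconn : (G.induce (T : Set N)).Connected) :
    ∃ Cpo : ℝ, 0 < Cpo ∧ ∀ v : N → ℝ,
      Mnorm G pos α T (fun x => v x - avg G pos α T v) ≤ Cpo * Lnorm G pos α T v :=
  stmt3_general G pos α hdist T hTconn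
end

section
/- Bubble operator estimates: let H > 0 and ρ, ρ′ > 0, suppose dist_T(x, ∂T) ≤ H for all x ∈ T and q_T(b̃_T) ≥ ρ ρ′ H, and set b_T = b̃_T / q_T(b̃_T). Then for every v : 𝒩 → ℝ, |q_T(v) b_T|_{M,T} ≤ (ρ ρ′)⁻¹ |v|_{M,T} and |q_T(v) b_T|_{L,T} ≤ (ρ ρ′)⁻¹ H⁻¹ |v|_{M,T}. -/
open Finset

variable {n : ℕ} {N : Type*}

/- ### Auxiliary lemmas -/

lemma my_wlen_nonneg (G : SimpleGraph N) (pos : N → EuclideanSpace ℝ (Fin n)) {x y : N}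
    (w : G.Walk x y) : 0 ≤ wlen G pos w :=
  List.sum_nonneg fun a ha => by
    obtain ⟨d, _, rfl⟩ := List.mem_map.mp ha
    exact dist_nonneg

lemma my_distT_bddBelow (G : SimpleGraph N) (pos : N → EuclideanSpace ℝ (Fin n))
    (T bnd : Finset N) (x : N) :
    BddBelow {ℓ : ℝ | ∃ y ∈ bnd, ∃ w : G.Walk x y, (∀ z ∈ w.support, z ∈ T) ∧ ℓ = wlen G pos w} :=
  ⟨0, fun ℓ hℓ => by obtain ⟨y, _, w, _, rfl⟩ := hℓ; exact my_wlen_nonneg G pos w⟩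

lemma my_distT_nonneg (G : SimpleGraph N) (pos : N → EuclideanSpace ℝ (Fin n))
    (T bnd : Finset N) (x : N) : 0 ≤ distT G pos T bnd x :=
  Real.sInf_nonneg fun ℓ hℓ => by
    obtain ⟨y, _, w, _, rfl⟩ := hℓ; exact my_wlen_nonneg G pos w

lemma my_distT_zero (G : SimpleGraph N) (pos : N → EuclideanSpace ℝ (Fin n))
    (T bnd : Finset N) (hbndsub : bnd ⊆ T) {x : N} (hx : x ∈ bnd) :
    distT G pos T bnd x = 0 := by
  refine le_antisymm ?_ (my_distT_nonneg G pos T bnd x)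
  refine csInf_le (my_distT_bddBelow G pos T bnd x) ?_
  refine ⟨x, hx, SimpleGraph.Walk.nil, ?_, ?_⟩
  · intro z hz
    simp only [SimpleGraph.Walk.support_nil, List.mem_singleton] at hz
    subst hz; exact hbndsub hx
  · simp [wlen]

lemma my_distT_lip (G : SimpleGraph N) (pos : N → EuclideanSpace ℝ (Fin n))
    (T bnd : Finset N)
    (hjoin : ∀ x ∈ T, ∃ y ∈ bnd, ∃ w : G.Walk x y, ∀ z ∈ w.support, z ∈ T)
    {x y : N} (hadj : G.Adj x y) (hx : x ∈ T) (hy : y ∈ T) :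
    distT G pos T bnd x ≤ dist (pos x) (pos y) + distT G pos T bnd y := by
  have hne : {ℓ : ℝ | ∃ z ∈ bnd, ∃ w : G.Walk y z, (∀ u ∈ w.support, u ∈ T) ∧
      ℓ = wlen G pos w}.Nonempty := by
    obtain ⟨z, hz, w, hw⟩ := hjoin y hy
    exact ⟨wlen G pos w, z, hz, w, hw, rfl⟩
  rw [add_comm, ← sub_le_iff_le_add]
  unfold distT
  refine le_csInf hne ?_
  rintro ℓ ⟨z, hz, w, hw, rfl⟩
  rw [sub_le_iff_le_add]
  refine csInf_le (my_distT_bddBelow G pos T bnd x) ?_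
  refine ⟨z, hz, SimpleGraph.Walk.cons hadj w, ?_, ?_⟩
  · intro u hu
    rw [SimpleGraph.Walk.support_cons] at hu
    rcases List.mem_cons.mp hu with rfl | hu
    · exact hx
    · exact hw u hu
  · simp [wlen, add_comm]

lemma my_btilde_nonneg [DecidableEq N] (G : SimpleGraph N)
    (pos : N → EuclideanSpace ℝ (Fin n)) (T bnd : Finset N) (x : N) :
    0 ≤ btilde G pos T bnd x := by
  unfold btilde
  split
  · exact my_distT_nonneg G pos T bnd x
  · exact le_refl 0

lemma my_btilde_lip [DecidableEq N] (G : SimpleGraph N)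
    (pos : N → EuclideanSpace ℝ (Fin n)) (T bnd : Finset N)
    (hbndsub : bnd ⊆ T)
    (hbnd : ∀ x ∈ T, (∃ y : N, G.Adj x y ∧ y ∉ T) → x ∈ bnd)
    (hjoin : ∀ x ∈ T, ∃ y ∈ bnd, ∃ w : G.Walk x y, ∀ z ∈ w.support, z ∈ T)
    {x y : N} (hadj : G.Adj x y) :
    |btilde G pos T bnd x - btilde G pos T bnd y| ≤ dist (pos x) (pos y) := by
  have key : ∀ a b : N, G.Adj a b →
      btilde G pos T bnd a ≤ dist (pos a) (pos b) + btilde G pos T bnd b := by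
    intro a b hab
    by_cases ha : a ∈ T
    · by_cases hbT : b ∈ T
      · simpa [btilde, ha, hbT] using my_distT_lip G pos T bnd hjoin hab ha hbT
      · have habnd : a ∈ bnd := hbnd a ha ⟨b, hab, hbT⟩
        have h0 : btilde G pos T bnd a = 0 := by
          simp [btilde, ha, my_distT_zero G pos T bnd hbndsub habnd]
        rw [h0]
        exact add_nonneg dist_nonneg (my_btilde_nonneg G pos T bnd b)
    · have h0 : btilde G pos T bnd a = 0 := by simp [btilde, ha]
      rw [h0]
      exact add_nonneg dist_nonneg (my_btilde_nonneg G pos T bnd b)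
  rw [abs_sub_le_iff]
  constructor
  · linarith [key x y hadj]
  · have h := key y x hadj.symm
    rw [dist_comm (pos y) (pos x)] at h
    linarith

theorem stmt7 [Fintype N] [DecidableEq N] (G : SimpleGraph N) [DecidableRel G.Adj]
    (pos : N → EuclideanSpace ℝ (Fin n)) (α : ℝ)
    (hα : 0 ≤ α ∧ α ≤ 2) (hpos : Function.Injective pos)
    (hdist : ∀ x y : N, G.Adj x y → 0 < dist (pos x) (pos y))
    (hcard : 1 < Fintype.card N) (hconn : G.Connected)
    (T bnd : Finset N) (hT : T.Nonempty) (hbndne : bnd.Nonempty) (hbndsub : bnd ⊆ T)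
    (hbnd : ∀ x ∈ T, (∃ y : N, G.Adj x y ∧ y ∉ T) → x ∈ bnd)
    (hjoin : ∀ x ∈ T, ∃ y ∈ bnd, ∃ w : G.Walk x y, ∀ z ∈ w.support, z ∈ T)
    (H ρ ρ' : ℝ) (hH : 0 < H) (hρ : 0 < ρ) (hρ' : 0 < ρ')
    (hdiam : ∀ x ∈ T, distT G pos T bnd x ≤ H)
    (hq : ρ * ρ' * H ≤ avg G pos α T (btilde G pos T bnd))
    (b : N → ℝ) (hb : b = fun x => btilde G pos T bnd x / avg G pos α T (btilde G pos T bnd)) :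
    ∀ v : N → ℝ,
      Mnorm G pos α T (fun x => avg G pos α T v * b x) ≤ (ρ * ρ')⁻¹ * Mnorm G pos α T v ∧
      Lnorm G pos α T (fun x => avg G pos α T v * b x) ≤ (ρ * ρ')⁻¹ * H⁻¹ * Mnorm G pos α T v := by
  intro v
  have hρρ : (0:ℝ) < ρ * ρ' := mul_pos hρ hρ'
  have hρρH : (0:ℝ) < ρ * ρ' * H := mul_pos hρρ hH
  set qb := avg G pos α T (btilde G pos T bnd) with hqbdef
  set q := avg G pos α T v with hqdef
  have hqb0 : 0 < qb := lt_of_lt_of_le hρρH hq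
  have hqbne : qb ≠ 0 := ne_of_gt hqb0
  set w : N → ℝ := fun x => (1/2 : ℝ) * ∑ y ∈ G.neighborFinset x,
      dist (pos x) (pos y) ^ ((2:ℝ) - α) with hwdef
  have hw0 : ∀ x, 0 ≤ w x := fun x =>
    mul_nonneg (by norm_num) (Finset.sum_nonneg fun y _ => Real.rpow_nonneg dist_nonneg _)
  have hM : ∀ u u' : N → ℝ, Mform G pos α T u u' = ∑ x ∈ T, w x * (u x * u' x) := by
    intro u u'
    simp only [Mform, hwdef]
    refine Finset.sum_congr rfl fun x _ => ?_
    rw [← Finset.sum_mul]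
    ring
  set W := Mform G pos α T (fun _ => 1) (fun _ => 1) with hWdef
  set Bv := Mform G pos α T v v with hBvdef
  have hWsum : W = ∑ x ∈ T, w x := by
    rw [hWdef, hM]; exact Finset.sum_congr rfl fun x _ => by ring
  have hW0 : 0 ≤ W := by
    rw [hWsum]; exact Finset.sum_nonneg fun x _ => hw0 x
  have hBv0 : 0 ≤ Bv := by
    rw [hBvdef, hM]
    exact Finset.sum_nonneg fun x _ => mul_nonneg (hw0 x) (mul_self_nonneg _)
  have hWpos : 0 < W := by
    rcases hW0.lt_or_eq with h | h
    · exact h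
    · exfalso
      have hz : qb = 0 := by
        rw [hqbdef]; unfold avg; rw [← hWdef, ← h, div_zero]
      rw [hz] at hqb0; exact lt_irrefl 0 hqb0
  have hWne : W ≠ 0 := ne_of_gt hWpos
  -- Cauchy-Schwarz : q^2 * W ≤ Bv
  have hs : ∀ x, Real.sqrt (w x) * Real.sqrt (w x) = w x :=
    fun x => Real.mul_self_sqrt (hw0 x)
  have hq2W : q ^ 2 * W ≤ Bv := by
    have key := Finset.sum_mul_sq_le_sq_mul_sq T
      (fun x => Real.sqrt (w x) * v x) (fun x => Real.sqrt (w x))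
    have e1 : ∑ x ∈ T, (Real.sqrt (w x) * v x) * Real.sqrt (w x)
        = Mform G pos α T v (fun _ => 1) := by
      rw [hM]
      exact Finset.sum_congr rfl fun x _ => by linear_combination v x * hs x
    have e2 : ∑ x ∈ T, (Real.sqrt (w x) * v x) ^ 2 = Bv := by
      rw [hBvdef, hM]
      exact Finset.sum_congr rfl fun x _ => by linear_combination (v x) ^ 2 * hs x
    have e3 : ∑ x ∈ T, (Real.sqrt (w x)) ^ 2 = W := by
      rw [hWsum]
      exact Finset.sum_congr rfl fun x _ => by linear_combination hs x
    rw [e1, e2, e3] at key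
    have hqeq : q = Mform G pos α T v (fun _ => 1) / W := rfl
    rw [hqeq, div_pow]
    have e4 : Mform G pos α T v (fun _ => 1) ^ 2 / W ^ 2 * W
        = Mform G pos α T v (fun _ => 1) ^ 2 / W := by
      field_simp
    rw [e4]
    exact (div_le_iff₀ hWpos).2 key
  -- bounds on b
  have hbpt : ∀ x, b x = btilde G pos T bnd x / qb := by
    intro x; rw [hb]
  have hbnn : ∀ x, 0 ≤ b x := fun x => by
    rw [hbpt x]; exact div_nonneg (my_btilde_nonneg G pos T bnd x) hqb0.le
  have hble : ∀ x ∈ T, b x ≤ (ρ * ρ')⁻¹ := by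
    intro x hx
    rw [hbpt x, div_le_iff₀ hqb0]
    have h2 : btilde G pos T bnd x ≤ H := by
      simpa [btilde, hx] using hdiam x hx
    calc btilde G pos T bnd x ≤ H := h2
      _ ≤ (ρ * ρ')⁻¹ * qb := by
          rw [inv_mul_eq_div, le_div_iff₀ hρρ]
          calc H * (ρ * ρ') = ρ * ρ' * H := by ring
            _ ≤ qb := hq
  -- M-estimate
  have hMest : Mform G pos α T (fun x => q * b x) (fun x => q * b x)
      ≤ ((ρ * ρ')⁻¹) ^ 2 * Bv := by
    rw [hM]
    have step : ∑ x ∈ T, w x * ((q * b x) * (q * b x))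
        ≤ ∑ x ∈ T, w x * (((ρ * ρ')⁻¹) ^ 2 * (q * q)) := by
      refine Finset.sum_le_sum fun x hx => ?_
      refine mul_le_mul_of_nonneg_left ?_ (hw0 x)
      have h1 := hbnn x
      have h2 := hble x hx
      nlinarith [mul_self_nonneg q, mul_le_mul h2 h2 h1 (inv_nonneg.2 hρρ.le)]
    refine le_trans step ?_
    rw [← Finset.sum_mul]
    calc (∑ x ∈ T, w x) * (((ρ * ρ')⁻¹) ^ 2 * (q * q))
        = ((ρ * ρ')⁻¹) ^ 2 * (q ^ 2 * (∑ x ∈ T, w x)) := by ring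
      _ = ((ρ * ρ')⁻¹) ^ 2 * (q ^ 2 * W) := by rw [hWsum]
      _ ≤ ((ρ * ρ')⁻¹) ^ 2 * Bv := mul_le_mul_of_nonneg_left hq2W (by positivity)
  -- L-estimate
  have hqb2 : 0 < qb * qb := mul_pos hqb0 hqb0
  have hLest : Lform G pos α T (fun x => q * b x) (fun x => q * b x)
      ≤ ((ρ * ρ')⁻¹ * H⁻¹) ^ 2 * Bv := by
    have hRHS : (q * q / (qb * qb)) * W
        = ∑ x ∈ T, (1/2 : ℝ) * ∑ y ∈ G.neighborFinset x,
          (q * q / (qb * qb)) * dist (pos x) (pos y) ^ ((2:ℝ) - α) := by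
      rw [hWsum]
      simp only [hwdef, Finset.mul_sum]
      refine Finset.sum_congr rfl fun x _ => ?_
      refine Finset.sum_congr rfl fun y _ => by ring
    have hCW : Lform G pos α T (fun x => q * b x) (fun x => q * b x)
        ≤ (q * q / (qb * qb)) * W := by
      rw [hRHS]
      unfold Lform
      refine Finset.sum_le_sum fun x hxT => ?_
      refine mul_le_mul_of_nonneg_left ?_ (by norm_num)
      refine Finset.sum_le_sum fun y hy => ?_
      have hadj : G.Adj x y := (SimpleGraph.mem_neighborFinset G x y).1 hy
      have hd : 0 < dist (pos x) (pos y) := hdist x y hadj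
      have hdα : 0 < dist (pos x) (pos y) ^ α := Real.rpow_pos_of_pos hd α
      have h2α : dist (pos x) (pos y) ^ ((2:ℝ) - α)
          = dist (pos x) (pos y) ^ 2 / dist (pos x) (pos y) ^ α := by
        rw [Real.rpow_sub hd]
        congr 1
        rw [show (2:ℝ) = ((2:ℕ):ℝ) by norm_num, Real.rpow_natCast]
      have hlip : |btilde G pos T bnd x - btilde G pos T bnd y| ≤ dist (pos x) (pos y) :=
        my_btilde_lip G pos T bnd hbndsub hbnd hjoin hadj
      have habs := abs_le.mp hlip
      have hsq : (btilde G pos T bnd x - btilde G pos T bnd y) ^ 2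
          ≤ dist (pos x) (pos y) ^ 2 := sq_le_sq' habs.1 habs.2
      have hnum : (q * b x - q * b y) * (q * b x - q * b y)
          ≤ q * q / (qb * qb) * dist (pos x) (pos y) ^ 2 := by
        have e : (q * b x - q * b y) * (q * b x - q * b y)
            = (q * q) * (btilde G pos T bnd x - btilde G pos T bnd y) ^ 2 / (qb * qb) := by
          rw [hbpt x, hbpt y]
          field_simp
        rw [e, div_mul_eq_mul_div]
        exact (div_le_div_iff_of_pos_right hqb2).2 (mul_le_mul_of_nonneg_left hsq (mul_self_nonneg q))
      rw [h2α, ← mul_div_assoc]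
      exact (div_le_div_iff_of_pos_right hdα).2 hnum
    refine le_trans hCW ?_
    have hqbsq : (ρ * ρ' * H) * (ρ * ρ' * H) ≤ qb * qb :=
      mul_le_mul hq hq hρρH.le hqb0.le
    have h1 : q * q * W ≤ Bv := by
      calc q * q * W = q ^ 2 * W := by ring
        _ ≤ Bv := hq2W
    have h4 : ((ρ * ρ')⁻¹ * H⁻¹) ^ 2 * Bv * ((ρ * ρ' * H) * (ρ * ρ' * H)) = Bv := by
      have hone : (ρ * ρ')⁻¹ * H⁻¹ * (ρ * ρ' * H) = 1 := by
        field_simp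
      linear_combination Bv * ((ρ * ρ')⁻¹ * H⁻¹ * (ρ * ρ' * H) + 1) * hone
    rw [div_mul_eq_mul_div, div_le_iff₀ hqb2]
    calc q * q * W ≤ Bv := h1
      _ = ((ρ * ρ')⁻¹ * H⁻¹) ^ 2 * Bv * ((ρ * ρ' * H) * (ρ * ρ' * H)) := h4.symm
      _ ≤ ((ρ * ρ')⁻¹ * H⁻¹) ^ 2 * Bv * (qb * qb) :=
          mul_le_mul_of_nonneg_left hqbsq (mul_nonneg (sq_nonneg _) hBv0)
  constructor
  · have h := Real.sqrt_le_sqrt hMest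
    rw [Real.sqrt_mul (sq_nonneg _), Real.sqrt_sq (inv_nonneg.2 hρρ.le)] at h
    unfold Mnorm
    rw [hBvdef] at h
    exact h
  · have h := Real.sqrt_le_sqrt hLest
    have hc2 : (0:ℝ) ≤ (ρ * ρ')⁻¹ * H⁻¹ := by positivity
    rw [Real.sqrt_mul (sq_nonneg _), Real.sqrt_sq hc2] at h
    unfold Lnorm Mnorm
    rw [hBvdef] at h
    exact h
end

section
/- Exactness for piecewise constant right-hand sides: suppose f(x) = m(x) g(x) for all nodes x, where m(x) = ½ Σ_{y∼x} |x−y|^{2−α} is the diagonal entry of M at x and g : 𝒩 → ℝ is constant on each element of 𝒯_H. Then the prototypical Galerkin approximation is exact: u_H = u. -/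
open Finset

variable {n : ℕ} {N : Type*}

theorem stmt10 [Fintype N] [DecidableEq N] (G : SimpleGraph N) [DecidableRel G.Adj]
    (pos : N → EuclideanSpace ℝ (Fin n)) (α : ℝ)
    (hα : 0 ≤ α ∧ α ≤ 2) (hpos : Function.Injective pos)
    (hdist : ∀ x y : N, G.Adj x y → 0 < dist (pos x) (pos y))
    (hcard : 1 < Fintype.card N) (hconn : G.Connected)
    (Γ : Set N) (hΓ : Γ.Nonempty)
    (P : Finset (Finset N))
    (hPne : ∀ T ∈ P, T.Nonempty)
    (hPdisj : ∀ T ∈ P, ∀ S ∈ P, T ≠ S → Disjoint T S)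
    (hPcover : ∀ x : N, ∃ T ∈ P, x ∈ T)
    (Pi : (N → ℝ) → (N → ℝ))
    (hPi : ∀ v : N → ℝ, ∀ T ∈ P, ∀ x ∈ T, Pi v x = avg G pos α T v)
    (K : (N → ℝ) →ₗ[ℝ] (N → ℝ))
    (hKsym : ∀ u v : N → ℝ, ip (K u) v = ip u (K v))
    (γ γ' : ℝ) (hγ : 0 < γ) (hγγ' : γ ≤ γ')
    (hspec : ∀ v : N → ℝ, (∀ x ∈ Γ, v x = 0) →
      γ * Lform G pos α Finset.univ v v ≤ ip (K v) v ∧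
        ip (K v) v ≤ γ' * Lform G pos α Finset.univ v v)
    (f u : N → ℝ) (hu : ∀ x ∈ Γ, u x = 0)
    (hsol : ∀ v : N → ℝ, (∀ x ∈ Γ, v x = 0) → ip (K u) v = ip f v)
    (uH : N → ℝ) (huHV : ∀ x ∈ Γ, uH x = 0)
    (huHmem : ∀ w : N → ℝ, ((∀ x ∈ Γ, w x = 0) ∧ Pi w = 0) → ip (K uH) w = 0)
    (huHsol : ∀ v : N → ℝ, ((∀ x ∈ Γ, v x = 0) ∧
        (∀ w : N → ℝ, ((∀ x ∈ Γ, w x = 0) ∧ Pi w = 0) → ip (K v) w = 0)) →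
      ip (K uH) v = ip f v)
    (g : N → ℝ) (hg : ∀ T ∈ P, ∀ x ∈ T, ∀ y ∈ T, g x = g y)
    (hf : ∀ x : N, f x =
      ((1 / 2 : ℝ) * ∑ y ∈ G.neighborFinset x, dist (pos x) (pos y) ^ ((2 : ℝ) - α)) * g x) :
    uH = u := by
  classical
  -- every node has a neighbor
  have hnbr : ∀ x : N, ∃ y, G.Adj x y := by
    intro x
    obtain ⟨y, hy⟩ := Fintype.exists_ne_of_one_lt_card hcard x
    obtain ⟨w⟩ := hconn x y
    obtain ⟨z, hz, -⟩ := SimpleGraph.Walk.not_nil_iff.mp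
      (SimpleGraph.Walk.not_nil_of_ne (p := w) (Ne.symm hy))
    exact ⟨z, hz⟩
  have key : ∀ w : N → ℝ, Pi w = 0 → ip f w = 0 := by
    intro w hw
    have huniv : (Finset.univ : Finset N) = P.biUnion id := by
      apply Finset.eq_of_subset_of_card_le
      · intro x _
        obtain ⟨T, hT, hxT⟩ := hPcover x
        exact Finset.mem_biUnion.mpr ⟨T, hT, hxT⟩
      · exact Finset.card_le_univ _
    have hpair : ∀ T ∈ P, ∀ S ∈ P, T ≠ S → Disjoint (id T) (id S) := hPdisj
    have hTzero : ∀ T ∈ P, ∑ x ∈ T, f x * w x = 0 := by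
      intro T hT
      obtain ⟨x₀, hx₀⟩ := hPne T hT
      have havg : avg G pos α T w = 0 := by
        rw [← hPi w T hT x₀ hx₀, hw]; rfl
      have hdenpos : 0 < Mform G pos α T (fun _ => 1) (fun _ => 1) := by
        apply Finset.sum_pos
        · intro x hx
          have hne : (G.neighborFinset x).Nonempty := by
            obtain ⟨y, hy⟩ := hnbr x
            exact ⟨y, (SimpleGraph.mem_neighborFinset G x y).mpr hy⟩
          have : 0 < ∑ y ∈ G.neighborFinset x,
              dist (pos x) (pos y) ^ ((2 : ℝ) - α) * ((1:ℝ) * 1) := by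
            apply Finset.sum_pos _ hne
            intro y hy
            have := hdist x y ((SimpleGraph.mem_neighborFinset G x y).mp hy)
            positivity
          simp only [mul_one, one_mul] at this ⊢
          linarith
        · exact ⟨x₀, hx₀⟩
      have hnum : Mform G pos α T w (fun _ => 1) = 0 := by
        have := (div_eq_zero_iff).mp havg
        rcases this with h | h
        · exact h
        · exact absurd h (ne_of_gt hdenpos)
      have hrw : ∑ x ∈ T, f x * w x = g x₀ * Mform G pos α T w (fun _ => 1) := by
        rw [Mform, Finset.mul_sum]
        refine Finset.sum_congr rfl fun x hx => ?_
        rw [hf x, hg T hT x hx x₀ hx₀]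
        simp only [mul_one]
        rw [← Finset.sum_mul]
        ring
      rw [hrw, hnum, mul_zero]
    rw [ip, huniv, Finset.sum_biUnion hpair]
    exact Finset.sum_eq_zero hTzero
  set e : N → ℝ := u - uH with he
  have heΓ : ∀ x ∈ Γ, e x = 0 := by
    intro x hx
    simp [he, hu x hx, huHV x hx]
  -- e ∈ V_H
  have heVH : ∀ w : N → ℝ, ((∀ x ∈ Γ, w x = 0) ∧ Pi w = 0) → ip (K e) w = 0 := by
    intro w hwprop
    have h1 : ip (K u) w = 0 := by rw [hsol w hwprop.1]; exact key w hwprop.2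
    have h2 : ip (K uH) w = 0 := huHmem w hwprop
    have : K e = K u - K uH := by rw [he, map_sub]
    rw [this]
    have : ip (K u - K uH) w = ip (K u) w - ip (K uH) w := by
      simp [ip, sub_mul, Finset.sum_sub_distrib]
    rw [this, h1, h2, sub_zero]
  have hKee : ip (K e) e = 0 := by
    have h1 : ip (K u) e = ip f e := hsol e heΓ
    have h2 : ip (K uH) e = ip f e := huHsol e ⟨heΓ, heVH⟩
    have : K e = K u - K uH := by rw [he, map_sub]
    rw [this]
    have : ip (K u - K uH) e = ip (K u) e - ip (K uH) e := by
      simp [ip, sub_mul, Finset.sum_sub_distrib]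
    rw [this, h1, h2, sub_self]
  have hLnonneg : 0 ≤ Lform G pos α Finset.univ e e := by
    apply Finset.sum_nonneg
    intro x _
    have : 0 ≤ ∑ y ∈ G.neighborFinset x,
        ((e x - e y) * (e x - e y)) / dist (pos x) (pos y) ^ α := by
      apply Finset.sum_nonneg
      intro y hy
      have := hdist x y ((SimpleGraph.mem_neighborFinset G x y).mp hy)
      exact div_nonneg (mul_self_nonneg _) (le_of_lt (Real.rpow_pos_of_pos this α))
    linarith
  have hLzero : Lform G pos α Finset.univ e e = 0 := by
    have := (hspec e heΓ).1
    rw [hKee] at this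
    nlinarith
  -- constancy across edges
  have hedge : ∀ x y : N, G.Adj x y → e x = e y := by
    intro x y hxy
    have hterm : ∀ x ∈ (Finset.univ : Finset N), (0:ℝ) ≤ (1 / 2 : ℝ) * ∑ y ∈ G.neighborFinset x,
        ((e x - e y) * (e x - e y)) / dist (pos x) (pos y) ^ α := by
      intro x _
      have : 0 ≤ ∑ y ∈ G.neighborFinset x,
          ((e x - e y) * (e x - e y)) / dist (pos x) (pos y) ^ α := by
        apply Finset.sum_nonneg
        intro y hy
        have := hdist x y ((SimpleGraph.mem_neighborFinset G x y).mp hy)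
        exact div_nonneg (mul_self_nonneg _) (le_of_lt (Real.rpow_pos_of_pos this α))
      linarith
    have hx0 := (Finset.sum_eq_zero_iff_of_nonneg hterm).mp hLzero x (Finset.mem_univ x)
    have hinner : ∑ y ∈ G.neighborFinset x,
        ((e x - e y) * (e x - e y)) / dist (pos x) (pos y) ^ α = 0 := by linarith
    have hterm2 : ∀ y ∈ G.neighborFinset x,
        (0:ℝ) ≤ ((e x - e y) * (e x - e y)) / dist (pos x) (pos y) ^ α := by
      intro y hy
      have := hdist x y ((SimpleGraph.mem_neighborFinset G x y).mp hy)
      exact div_nonneg (mul_self_nonneg _) (le_of_lt (Real.rpow_pos_of_pos this α))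
    have hy0 := (Finset.sum_eq_zero_iff_of_nonneg hterm2).mp hinner y
      ((SimpleGraph.mem_neighborFinset G x y).mpr hxy)
    have hdpos : 0 < dist (pos x) (pos y) ^ α := Real.rpow_pos_of_pos (hdist x y hxy) α
    have hms : (e x - e y) * (e x - e y) = 0 := by
      rcases div_eq_zero_iff.mp hy0 with h | h
      · exact h
      · exact absurd h (ne_of_gt hdpos)
    have := mul_self_eq_zero.mp hms
    linarith
  -- e constant along walks
  have hwalk : ∀ x y : N, ∀ _ : G.Walk x y, e x = e y := by
    intro x y w
    induction w with
    | nil => rfl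
    | cons h p ih => rw [hedge _ _ h]; exact ih
  obtain ⟨γ₀, hγ₀⟩ := hΓ
  have hezero : ∀ x, e x = 0 := by
    intro x
    obtain ⟨w⟩ := hconn x γ₀
    rw [hwalk x γ₀ w, heΓ γ₀ hγ₀]
  funext x
  have := hezero x
  simp [he] at this
  linarith
end

section
/- Discrete product rule for cut-off functions: let H > 0, C_η > 0, let η : 𝒩 → ℝ satisfy 0 ≤ η(x) ≤ 1 for all x and |η(x) − η(y)| ≤ C_η H⁻¹ |x − y| for every edge {x,y} ∈ ℰ, let R ⊆ 𝒩, and let R̄ = R ∪ {y ∈ 𝒩 : y ∼ x for some x ∈ R}. Then for every φ : 𝒩 → ℝ, |η φ|_{L,R} ≤ 2 |φ|_{L,R̄} + 2 C_η H⁻¹ |φ|_{M,R̄}, where η φ denotes the pointwise product. -/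
open Finset

variable {n : ℕ} {N : Type*}

lemma sum_nbr_swap_le [Fintype N] [DecidableEq N] (G : SimpleGraph N) [DecidableRel G.Adj]
    (R Rbar : Finset N) (hRbar : ∀ z : N, z ∈ Rbar ↔ z ∈ R ∨ ∃ x ∈ R, G.Adj x z)
    (g : N → N → ℝ) (hg : ∀ x y, 0 ≤ g x y) :
    ∑ x ∈ R, ∑ y ∈ G.neighborFinset x, g x y ≤
      ∑ y ∈ Rbar, ∑ x ∈ G.neighborFinset y, g x y := by
  rw [Finset.sum_sigma' R (fun x => G.neighborFinset x) (fun x y => g x y),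
    Finset.sum_sigma' Rbar (fun y => G.neighborFinset y) (fun y x => g x y)]
  have einj : Function.Injective (fun p : (Σ _ : N, N) => (⟨p.2, p.1⟩ : Σ _ : N, N)) := by
    intro p q h
    cases p; cases q
    simp only [Sigma.mk.inj_iff, heq_eq_eq] at h ⊢
    exact ⟨h.2, h.1⟩
  have : ∑ p ∈ R.sigma (fun x => G.neighborFinset x), g p.1 p.2 =
      ∑ p ∈ (R.sigma (fun x => G.neighborFinset x)).map ⟨_, einj⟩, g p.2 p.1 := by
    rw [Finset.sum_map]
    rfl
  rw [this]
  apply Finset.sum_le_sum_of_subset_of_nonneg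
  · intro p hp
    simp only [Finset.mem_map, Finset.mem_sigma, SimpleGraph.mem_neighborFinset,
      Function.Embedding.coeFn_mk] at hp ⊢
    obtain ⟨q, ⟨hq1, hq2⟩, rfl⟩ := hp
    exact ⟨(hRbar q.2).2 (Or.inr ⟨q.1, hq1, hq2⟩), hq2.symm⟩
  · intro p _ _
    exact hg p.2 p.1

lemma lform_mono [Fintype N] (G : SimpleGraph N) [DecidableRel G.Adj]
    (pos : N → EuclideanSpace ℝ (Fin n)) (α : ℝ) (S T : Finset N) (hST : S ⊆ T)
    (v : N → ℝ) : Lform G pos α S v v ≤ Lform G pos α T v v := by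
  apply Finset.sum_le_sum_of_subset_of_nonneg hST
  intro x _ _
  have : (0:ℝ) ≤ ∑ y ∈ G.neighborFinset x,
      ((v x - v y) * (v x - v y)) / dist (pos x) (pos y) ^ α := by
    apply Finset.sum_nonneg
    intro y _
    exact div_nonneg (mul_self_nonneg _) (Real.rpow_nonneg dist_nonneg _)
  linarith

lemma lform_nonneg [Fintype N] (G : SimpleGraph N) [DecidableRel G.Adj]
    (pos : N → EuclideanSpace ℝ (Fin n)) (α : ℝ) (S : Finset N)
    (v : N → ℝ) : 0 ≤ Lform G pos α S v v := by
  apply Finset.sum_nonneg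
  intro x _
  have : (0:ℝ) ≤ ∑ y ∈ G.neighborFinset x,
      ((v x - v y) * (v x - v y)) / dist (pos x) (pos y) ^ α := by
    apply Finset.sum_nonneg
    intro y _
    exact div_nonneg (mul_self_nonneg _) (Real.rpow_nonneg dist_nonneg _)
  linarith

lemma mform_nonneg [Fintype N] (G : SimpleGraph N) [DecidableRel G.Adj]
    (pos : N → EuclideanSpace ℝ (Fin n)) (α : ℝ) (S : Finset N)
    (v : N → ℝ) : 0 ≤ Mform G pos α S v v := by
  apply Finset.sum_nonneg
  intro x _
  have : (0:ℝ) ≤ ∑ y ∈ G.neighborFinset x,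
      dist (pos x) (pos y) ^ ((2:ℝ) - α) * (v x * v x) := by
    apply Finset.sum_nonneg
    intro y _
    exact mul_nonneg (Real.rpow_nonneg dist_nonneg _) (mul_self_nonneg _)
  linarith


theorem stmt13 [Fintype N] [DecidableEq N] (G : SimpleGraph N) [DecidableRel G.Adj]
    (pos : N → EuclideanSpace ℝ (Fin n)) (α : ℝ)
    (hα : 0 ≤ α ∧ α ≤ 2) (hpos : Function.Injective pos)
    (hdist : ∀ x y : N, G.Adj x y → 0 < dist (pos x) (pos y))
    (hcard : 1 < Fintype.card N) (hconn : G.Connected)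
    (H Ceta : ℝ) (hH : 0 < H) (hCeta : 0 < Ceta)
    (η : N → ℝ) (hη01 : ∀ x : N, 0 ≤ η x ∧ η x ≤ 1)
    (hηlip : ∀ x y : N, G.Adj x y → |η x - η y| ≤ Ceta * H⁻¹ * dist (pos x) (pos y))
    (R Rbar : Finset N)
    (hRbar : ∀ z : N, z ∈ Rbar ↔ z ∈ R ∨ ∃ x ∈ R, G.Adj x z) :
    ∀ φ : N → ℝ,
      Lnorm G pos α R (fun x => η x * φ x) ≤
        2 * Lnorm G pos α Rbar φ + 2 * Ceta * H⁻¹ * Mnorm G pos α Rbar φ := by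
  intro φ
  set K : ℝ := Ceta * H⁻¹ with hKdef
  have hK : 0 < K := mul_pos hCeta (inv_pos.mpr hH)
  set A := Lform G pos α Rbar φ φ with hA
  set B := Mform G pos α Rbar φ φ with hB
  have hA0 : 0 ≤ A := lform_nonneg G pos α Rbar φ
  have hB0 : 0 ≤ B := mform_nonneg G pos α Rbar φ
  have hRsub : R ⊆ Rbar := fun z hz => (hRbar z).2 (Or.inl hz)
  -- pointwise estimate on each edge
  have pointwise : ∀ x y : N, y ∈ G.neighborFinset x →
      ((η x * φ x - η y * φ y) * (η x * φ x - η y * φ y)) / dist (pos x) (pos y) ^ α ≤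
        2 * (((φ x - φ y) * (φ x - φ y)) / dist (pos x) (pos y) ^ α) +
        2 * K ^ 2 * (dist (pos x) (pos y) ^ ((2:ℝ) - α) * (φ y * φ y)) := by
    intro x y hy
    rw [SimpleGraph.mem_neighborFinset] at hy
    set d := dist (pos x) (pos y) with hd
    have hd0 : 0 < d := hdist x y hy
    have hdα : 0 < d ^ α := Real.rpow_pos_of_pos hd0 α
    have hsub : d ^ ((2:ℝ) - α) = d ^ (2:ℕ) / d ^ α := by
      rw [Real.rpow_sub hd0]
      norm_num [Real.rpow_two]
    have hlip : |η x - η y| ≤ K * d := hηlip x y hy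
    have hlip2 : (η x - η y) ^ 2 ≤ K ^ 2 * d ^ 2 := by
      have h2 : |η x - η y| ^ 2 ≤ (K * d) ^ 2 :=
        pow_le_pow_left₀ (abs_nonneg _) hlip 2
      rw [sq_abs] at h2
      nlinarith
    have hη1 : (η x) ^ 2 ≤ 1 := by
      have h1 := (hη01 x).1; have h2 := (hη01 x).2; nlinarith
    have num : (η x * φ x - η y * φ y) * (η x * φ x - η y * φ y) ≤
        2 * ((φ x - φ y) * (φ x - φ y)) + 2 * K ^ 2 * (d ^ 2 * (φ y * φ y)) := by
      nlinarith [sq_nonneg (η x * (φ x - φ y) - φ y * (η x - η y)),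
        mul_nonneg (mul_self_nonneg (φ y)) (sub_nonneg.mpr hlip2),
        mul_nonneg (mul_self_nonneg (φ x - φ y)) (sub_nonneg.mpr hη1)]
    calc ((η x * φ x - η y * φ y) * (η x * φ x - η y * φ y)) / d ^ α
        ≤ (2 * ((φ x - φ y) * (φ x - φ y)) + 2 * K ^ 2 * (d ^ 2 * (φ y * φ y))) / d ^ α := by
          gcongr
      _ = 2 * (((φ x - φ y) * (φ x - φ y)) / d ^ α) +
          2 * K ^ 2 * (d ^ ((2:ℝ) - α) * (φ y * φ y)) := by
          rw [hsub]; field_simp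
  -- summed estimate
  have step : Lform G pos α R (fun x => η x * φ x) (fun x => η x * φ x) ≤
      2 * Lform G pos α R φ φ + 2 * K ^ 2 *
        (∑ x ∈ R, (1 / 2 : ℝ) * ∑ y ∈ G.neighborFinset x,
          dist (pos x) (pos y) ^ ((2:ℝ) - α) * (φ y * φ y)) := by
    unfold Lform
    rw [Finset.mul_sum, Finset.mul_sum, ← Finset.sum_add_distrib]
    apply Finset.sum_le_sum
    intro x hx
    have hsum := Finset.sum_le_sum (fun y hy => pointwise x y hy)
    calc (1/2 : ℝ) * ∑ y ∈ G.neighborFinset x,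
          ((η x * φ x - η y * φ y) * (η x * φ x - η y * φ y)) / dist (pos x) (pos y) ^ α
        ≤ (1/2 : ℝ) * ∑ y ∈ G.neighborFinset x,
            (2 * (((φ x - φ y) * (φ x - φ y)) / dist (pos x) (pos y) ^ α) +
             2 * K ^ 2 * (dist (pos x) (pos y) ^ ((2:ℝ) - α) * (φ y * φ y))) := by
          exact mul_le_mul_of_nonneg_left hsum (by norm_num)
      _ = 2 * ((1/2 : ℝ) * ∑ y ∈ G.neighborFinset x,
              ((φ x - φ y) * (φ x - φ y)) / dist (pos x) (pos y) ^ α) +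
          2 * K ^ 2 * ((1/2 : ℝ) * ∑ y ∈ G.neighborFinset x,
              dist (pos x) (pos y) ^ ((2:ℝ) - α) * (φ y * φ y)) := by
          rw [Finset.sum_add_distrib, ← Finset.mul_sum, ← Finset.mul_sum]
          ring
  -- the M-type sum is bounded by B
  have hMsum : ∑ x ∈ R, (1 / 2 : ℝ) * ∑ y ∈ G.neighborFinset x,
      dist (pos x) (pos y) ^ ((2:ℝ) - α) * (φ y * φ y) ≤ B := by
    rw [← Finset.mul_sum]
    have h := sum_nbr_swap_le G R Rbar hRbar
      (fun x y => dist (pos x) (pos y) ^ ((2:ℝ) - α) * (φ y * φ y))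
      (fun x y => mul_nonneg (Real.rpow_nonneg dist_nonneg _) (mul_self_nonneg _))
    have hBexp : B = (1 / 2 : ℝ) * ∑ y ∈ Rbar, ∑ x ∈ G.neighborFinset y,
        dist (pos x) (pos y) ^ ((2:ℝ) - α) * (φ y * φ y) := by
      rw [hB]
      unfold Mform
      rw [Finset.mul_sum]
      refine Finset.sum_congr rfl (fun x hx => ?_)
      congr 1
      refine Finset.sum_congr rfl (fun y hy => ?_)
      rw [dist_comm]
    rw [hBexp]
    linarith
  have key : Lform G pos α R (fun x => η x * φ x) (fun x => η x * φ x) ≤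
      2 * A + 2 * K ^ 2 * B := by
    have h1 : Lform G pos α R φ φ ≤ A := lform_mono G pos α R Rbar hRsub φ
    nlinarith [step, hMsum, sq_nonneg K]
  -- take square roots
  have rhs0 : 0 ≤ 2 * Real.sqrt A + 2 * K * Real.sqrt B := by positivity
  have sqA := Real.sq_sqrt hA0
  have sqB := Real.sq_sqrt hB0
  have sA0 := Real.sqrt_nonneg A
  have sB0 := Real.sqrt_nonneg B
  have final : Real.sqrt (Lform G pos α R (fun x => η x * φ x) (fun x => η x * φ x)) ≤
      2 * Real.sqrt A + 2 * K * Real.sqrt B := by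
    have h2 : 2 * A + 2 * K ^ 2 * B ≤ (2 * Real.sqrt A + 2 * K * Real.sqrt B) ^ 2 := by
      nlinarith [mul_nonneg (mul_nonneg hK.le sA0) sB0]
    calc Real.sqrt (Lform G pos α R (fun x => η x * φ x) (fun x => η x * φ x))
        ≤ Real.sqrt ((2 * Real.sqrt A + 2 * K * Real.sqrt B) ^ 2) :=
          Real.sqrt_le_sqrt (key.trans h2)
      _ = 2 * Real.sqrt A + 2 * K * Real.sqrt B := Real.sqrt_sq rhs0
  simpa [Lnorm, Mnorm, hKdef, mul_assoc] using final
end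

section
/- Representation and kernel of P_H: let 𝒦 ⊆ 𝒯_H, let Λ_T : 𝒩 → ℝ for T ∈ 𝒦, define I_H v = Σ_{T∈𝒦} q_T(v) Λ_T, 𝓑_H v = Σ_{T∈𝒯_H} q_T(v) b_T, and P_H v = I_H v + 𝓑_H(v − I_H v). Suppose q_S(b_T) = 1 if S = T and q_S(b_T) = 0 if S ≠ T, for all elements S, T ∈ 𝒯_H. Then for all v : 𝒩 → ℝ: (i) P_H v = Σ_{T∈𝒯_H} q_T(v) P_H(b_T); (ii) q_S(P_H v) = q_S(v) for every element S, i.e. Π_H ∘ P_H = Π_H; and consequently (iii) P_H v = 0 if and only if Π_H v = 0, i.e. ker P_H = ker Π_H. -/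
open Finset

variable {n : ℕ} {N : Type*}

section Aux

variable [Fintype N] (G : SimpleGraph N) [DecidableRel G.Adj]
    (pos : N → EuclideanSpace ℝ (Fin n)) (α : ℝ)

lemma Mform_eq (S : Finset N) (u v : N → ℝ) :
    Mform G pos α S u v = ∑ x ∈ S,
      ((1/2 : ℝ) * ∑ y ∈ G.neighborFinset x, dist (pos x) (pos y) ^ ((2:ℝ) - α)) * (u x * v x) := by
  unfold Mform
  refine Finset.sum_congr rfl fun x _ => ?_
  rw [← Finset.sum_mul, ← mul_assoc]

lemma Mform_add (S : Finset N) (u v w : N → ℝ) :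
    Mform G pos α S (u + v) w = Mform G pos α S u w + Mform G pos α S v w := by
  simp only [Mform_eq, Pi.add_apply, add_mul, mul_add, Finset.sum_add_distrib]

lemma Mform_sub (S : Finset N) (u v w : N → ℝ) :
    Mform G pos α S (u - v) w = Mform G pos α S u w - Mform G pos α S v w := by
  simp only [Mform_eq, Pi.sub_apply, sub_mul, mul_sub, Finset.sum_sub_distrib]

lemma Mform_smul (S : Finset N) (c : ℝ) (u w : N → ℝ) :
    Mform G pos α S (c • u) w = c * Mform G pos α S u w := by
  rw [Mform_eq, Mform_eq, Finset.mul_sum]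
  exact Finset.sum_congr rfl fun x _ => by simp only [Pi.smul_apply, smul_eq_mul]; ring

lemma Mform_zero (S : Finset N) (w : N → ℝ) :
    Mform G pos α S (0 : N → ℝ) w = 0 := by
  simp [Mform_eq]

lemma avg_add (T : Finset N) (u v : N → ℝ) :
    avg G pos α T (u + v) = avg G pos α T u + avg G pos α T v := by
  unfold avg; rw [Mform_add, add_div]

lemma avg_sub (T : Finset N) (u v : N → ℝ) :
    avg G pos α T (u - v) = avg G pos α T u - avg G pos α T v := by
  unfold avg; rw [Mform_sub, sub_div]

lemma avg_smul (T : Finset N) (c : ℝ) (u : N → ℝ) :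
    avg G pos α T (c • u) = c * avg G pos α T u := by
  unfold avg; rw [Mform_smul, mul_div_assoc]

lemma avg_zero (T : Finset N) : avg G pos α T (0 : N → ℝ) = 0 := by
  unfold avg; rw [Mform_zero, zero_div]

lemma avg_sum {ι : Type*} (T : Finset N) (s : Finset ι) (c : ι → ℝ) (f : ι → N → ℝ) :
    avg G pos α T (∑ i ∈ s, c i • f i) = ∑ i ∈ s, c i * avg G pos α T (f i) := by
  induction s using Finset.cons_induction with
  | empty => simp [avg_zero]
  | cons a s ha ih => rw [Finset.sum_cons, Finset.sum_cons, avg_add, avg_smul, ih]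

end Aux

theorem stmt19 [Fintype N] [DecidableEq N] (G : SimpleGraph N) [DecidableRel G.Adj]
    (pos : N → EuclideanSpace ℝ (Fin n)) (α : ℝ)
    (hα : 0 ≤ α ∧ α ≤ 2) (hpos : Function.Injective pos)
    (hdist : ∀ x y : N, G.Adj x y → 0 < dist (pos x) (pos y))
    (hcard : 1 < Fintype.card N) (hconn : G.Connected)
    (P : Finset (Finset N))
    (hPne : ∀ T ∈ P, T.Nonempty)
    (hPdisj : ∀ T ∈ P, ∀ S ∈ P, T ≠ S → Disjoint T S)
    (hPcover : ∀ x : N, ∃ T ∈ P, x ∈ T)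
    (Pi : (N → ℝ) → (N → ℝ))
    (hPi : ∀ v : N → ℝ, ∀ T ∈ P, ∀ x ∈ T, Pi v x = avg G pos α T v)
    (Kc : Finset (Finset N)) (hKc : Kc ⊆ P)
    (Λ : Finset N → N → ℝ) (b : Finset N → N → ℝ)
    (IH BH PH : (N → ℝ) → (N → ℝ))
    (hIH : ∀ v : N → ℝ, IH v = ∑ T ∈ Kc, avg G pos α T v • Λ T)
    (hBH : ∀ v : N → ℝ, BH v = ∑ T ∈ P, avg G pos α T v • b T)
    (hPH : ∀ v : N → ℝ, PH v = IH v + BH (v - IH v))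
    (hqb : ∀ S ∈ P, ∀ T ∈ P, avg G pos α S (b T) = if S = T then 1 else 0) :
    ∀ v : N → ℝ,
      (PH v = ∑ T ∈ P, avg G pos α T v • PH (b T)) ∧
      (Pi (PH v) = Pi v) ∧
      (PH v = 0 ↔ Pi v = 0) := by

  intro v
  -- avg of BH w equals avg of w on elements of P
  have hqBH : ∀ S ∈ P, ∀ w : N → ℝ, avg G pos α S (BH w) = avg G pos α S w := by
    intro S hS w
    rw [hBH, avg_sum]
    calc ∑ T ∈ P, avg G pos α T w * avg G pos α S (b T)
        = ∑ T ∈ P, avg G pos α T w * (if S = T then 1 else 0) :=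
          Finset.sum_congr rfl fun T hT => by rw [hqb S hS T hT]
      _ = avg G pos α S w := by
          simp [mul_ite, mul_one, mul_zero, Finset.sum_ite_eq, hS]
  have hqPH : ∀ S ∈ P, ∀ u : N → ℝ, avg G pos α S (PH u) = avg G pos α S u := by
    intro S hS u
    rw [hPH, avg_add, hqBH S hS, avg_sub]
    ring
  have hIHcongr : ∀ u w : N → ℝ, (∀ T ∈ P, avg G pos α T u = avg G pos α T w) →
      IH u = IH w := by
    intro u w h
    rw [hIH, hIH]
    exact Finset.sum_congr rfl fun T hT => by rw [h T (hKc hT)]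
  have hPHcongr : ∀ u w : N → ℝ, (∀ T ∈ P, avg G pos α T u = avg G pos α T w) →
      PH u = PH w := by
    intro u w h
    have hI : IH u = IH w := hIHcongr u w h
    rw [hPH, hPH, hI]
    congr 1
    rw [hBH, hBH]
    refine Finset.sum_congr rfl fun T hT => ?_
    rw [avg_sub, avg_sub, h T hT]
  have hIHlin : ∀ (c : Finset N → ℝ) (f : Finset N → N → ℝ),
      IH (∑ T ∈ P, c T • f T) = ∑ T ∈ P, c T • IH (f T) := by
    intro c f
    rw [hIH]
    calc ∑ S ∈ Kc, avg G pos α S (∑ T ∈ P, c T • f T) • Λ S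
        = ∑ S ∈ Kc, ∑ T ∈ P, (c T * avg G pos α S (f T)) • Λ S := by
          refine Finset.sum_congr rfl fun S _ => ?_
          rw [avg_sum, Finset.sum_smul]
      _ = ∑ T ∈ P, ∑ S ∈ Kc, (c T * avg G pos α S (f T)) • Λ S := Finset.sum_comm
      _ = ∑ T ∈ P, c T • IH (f T) := by
          refine Finset.sum_congr rfl fun T _ => ?_
          rw [hIH, Finset.smul_sum]
          exact Finset.sum_congr rfl fun S _ => mul_smul _ _ _
  have hBHlin : ∀ (c : Finset N → ℝ) (f : Finset N → N → ℝ),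
      BH (∑ T ∈ P, c T • f T) = ∑ T ∈ P, c T • BH (f T) := by
    intro c f
    rw [hBH]
    calc ∑ S ∈ P, avg G pos α S (∑ T ∈ P, c T • f T) • b S
        = ∑ S ∈ P, ∑ T ∈ P, (c T * avg G pos α S (f T)) • b S := by
          refine Finset.sum_congr rfl fun S _ => ?_
          rw [avg_sum, Finset.sum_smul]
      _ = ∑ T ∈ P, ∑ S ∈ P, (c T * avg G pos α S (f T)) • b S := Finset.sum_comm
      _ = ∑ T ∈ P, c T • BH (f T) := by
          refine Finset.sum_congr rfl fun T _ => ?_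
          rw [hBH, Finset.smul_sum]
          exact Finset.sum_congr rfl fun S _ => mul_smul _ _ _
  have key : ∀ (c : Finset N → ℝ),
      PH (∑ T ∈ P, c T • b T) = ∑ T ∈ P, c T • PH (b T) := by
    intro c
    rw [hPH]
    have hIu : IH (∑ T ∈ P, c T • b T) = ∑ T ∈ P, c T • IH (b T) := hIHlin c b
    have hsub : (∑ T ∈ P, c T • b T) - IH (∑ T ∈ P, c T • b T)
        = ∑ T ∈ P, c T • (b T - IH (b T)) := by
      rw [hIu, ← Finset.sum_sub_distrib]
      exact Finset.sum_congr rfl fun T _ => (smul_sub _ _ _).symm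
    rw [hsub, hBHlin, hIu, ← Finset.sum_add_distrib]
    refine Finset.sum_congr rfl fun T _ => ?_
    rw [← smul_add, hPH (b T)]
  have part1 : PH v = ∑ T ∈ P, avg G pos α T v • PH (b T) := by
    have h1 : PH v = PH (BH v) :=
      hPHcongr v (BH v) fun T hT => (hqBH T hT v).symm
    rw [h1, hBH v, key]
  have part2 : Pi (PH v) = Pi v := by
    funext x
    obtain ⟨T, hT, hx⟩ := hPcover x
    rw [hPi _ T hT x hx, hPi _ T hT x hx, hqPH T hT v]
  have hPi0 : Pi (0 : N → ℝ) = 0 := by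
    funext x
    obtain ⟨T, hT, hx⟩ := hPcover x
    rw [hPi _ T hT x hx, avg_zero]
    rfl
  refine ⟨part1, part2, ?_, ?_⟩
  · intro h
    rw [← part2, h, hPi0]
  · intro h
    rw [part1]
    refine Finset.sum_eq_zero fun T hT => ?_
    obtain ⟨x, hx⟩ := hPne T hT
    have h0 : avg G pos α T v = 0 := by
      rw [← hPi v T hT x hx, h]; rfl
    rw [h0, zero_smul]
end
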